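/- Let t < 0, let y ∈ (0, −π/t), and let x ∈ ℝ with x + y·cot(ty) ≠ 0. Then the partial derivative of k_t in y satisfies ∂_y k_t(x, y) = (e^{-tx} / ((x + y·cot(ty))²·sin(ty))) · [(ty² + x) − t·x·y·cot(ty)]. Moreover, for y ∈ (0, y_t) one has ∂_y k_t(x_t^−(y), y) > 0. -/

import Mathlib

/-- For `t < 0`, `f_t(y) := 2y·sin(ty) + cos(ty)`. -/
noncomputable def fMap (t y : ℝ) : ℝ :=
  2 * y * Real.sin (t * y) + Real.cos (t * y)

/-- `v_t(y) := √(1/4 − y² − y·cot(ty))` for `y ≠ 0` and `v_t(0) := √(1/4 − 1/t)`. -/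
noncomputable def vMap (t y : ℝ) : ℝ :=
  if y = 0 then Real.sqrt (1 / 4 - 1 / t)
  else Real.sqrt (1 / 4 - y ^ 2 - y * Real.cot (t * y))

/-- `x_t^−(y) := −1/2 − v_t(y)`. -/
noncomputable def xMinus (t y : ℝ) : ℝ := -1 / 2 - vMap t y

/-- `k_t(x, y) := (y/sin(ty)) · e^{-tx} / (y·cot(ty) + x)`. -/
noncomputable def kMap (t x y : ℝ) : ℝ :=
  y / Real.sin (t * y) * Real.exp (-t * x) / (y * Real.cot (t * y) + x)

lemma sin_mul_neg' {u : ℝ} (h1 : -Real.pi < u) (h2 : u < 0) : Real.sin u < 0 :=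
  Real.sin_neg_of_neg_of_neg_pi_lt h2 h1

lemma sin_lt_mul_cos {u : ℝ} (h1 : -Real.pi < u) (h2 : u < 0) :
    Real.sin u < u * Real.cos u := by
  rcases le_or_gt u (-(Real.pi / 2)) with h | h
  · have hc : Real.cos u ≤ 0 := by
      have := Real.cos_nonpos_of_pi_div_two_le_of_le (x := -u) (by linarith) (by linarith)
      rwa [Real.cos_neg] at this
    have hs : Real.sin u < 0 := sin_mul_neg' h1 h2
    nlinarith
  · have hc : 0 < Real.cos u := Real.cos_pos_of_mem_Ioo ⟨h, by linarith [Real.pi_pos]⟩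
    have htan : -u < Real.tan (-u) := Real.lt_tan (by linarith) (by linarith)
    rw [Real.tan_neg] at htan
    have htan' : Real.tan u < u := by linarith
    have : Real.tan u * Real.cos u < u * Real.cos u := by
      exact mul_lt_mul_of_pos_right htan' hc
    rwa [Real.tan_eq_sin_div_cos, div_mul_cancel₀ _ hc.ne'] at this

lemma ucot_lt_one {u : ℝ} (h1 : -Real.pi < u) (h2 : u < 0) : u * Real.cot u < 1 := by
  have hs : Real.sin u < 0 := sin_mul_neg' h1 h2
  have key := sin_lt_mul_cos h1 h2
  rw [Real.cot_eq_cos_div_sin, ← mul_div_assoc]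
  have h := div_neg_of_pos_of_neg (show (0:ℝ) < u * Real.cos u - Real.sin u by linarith) hs
  rw [sub_div, div_self hs.ne] at h
  linarith

/-- Part 1 as a standalone lemma. -/
lemma kMap_hasDerivAt (t x y : ℝ) (ht : t < 0) (hy0 : 0 < y) (hy1 : y < -Real.pi / t)
    (hx : x + y * Real.cot (t * y) ≠ 0) :
    HasDerivAt (fun y' => kMap t x y')
      (Real.exp (-t * x) /
          ((x + y * Real.cot (t * y)) ^ 2 * Real.sin (t * y)) *
        ((t * y ^ 2 + x) - t * x * y * Real.cot (t * y))) y := by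
  have hu1 : -Real.pi < t * y := by
    rw [lt_div_iff_of_neg ht] at hy1
    linarith [mul_comm y t]
  have hu2 : t * y < 0 := mul_neg_of_neg_of_pos ht hy0
  have hs : Real.sin (t * y) < 0 := sin_mul_neg' hu1 hu2
  have hsne : Real.sin (t * y) ≠ 0 := hs.ne
  set E := Real.exp (-t * x) with hE
  have hty : HasDerivAt (fun y' : ℝ => t * y') t y := by
    simpa using (hasDerivAt_id y).const_mul t
  have hcos : HasDerivAt (fun y' => Real.cos (t * y')) (-Real.sin (t * y) * t) y :=
    (Real.hasDerivAt_cos (t * y)).comp y hty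
  have hsin : HasDerivAt (fun y' => Real.sin (t * y')) (Real.cos (t * y) * t) y :=
    (Real.hasDerivAt_sin (t * y)).comp y hty
  have hD : HasDerivAt (fun y' => y' * Real.cos (t * y') + x * Real.sin (t * y'))
      (1 * Real.cos (t * y) + y * (-Real.sin (t * y) * t) + x * (Real.cos (t * y) * t)) y :=
    ((hasDerivAt_id y).mul hcos).add (hsin.const_mul x)
  have hDval : y * Real.cos (t * y) + x * Real.sin (t * y)
      = Real.sin (t * y) * (x + y * Real.cot (t * y)) := by
    rw [Real.cot_eq_cos_div_sin]
    have h1 : Real.cos (t * y) / Real.sin (t * y) * Real.sin (t * y) = Real.cos (t * y) :=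
      div_mul_cancel₀ _ hsne
    linear_combination (-y) * h1
  have hD0 : y * Real.cos (t * y) + x * Real.sin (t * y) ≠ 0 := by
    rw [hDval]; exact mul_ne_zero hsne hx
  have hN : HasDerivAt (fun y' : ℝ => E * y') E y := by
    simpa using (hasDerivAt_id y).const_mul E
  have hg := hN.div hD hD0
  have heq : E / ((x + y * Real.cot (t * y)) ^ 2 * Real.sin (t * y)) *
        ((t * y ^ 2 + x) - t * x * y * Real.cot (t * y))
      = (E * (y * Real.cos (t * y) + x * Real.sin (t * y)) -
          E * y * (1 * Real.cos (t * y) + y * (-Real.sin (t * y) * t) + x * (Real.cos (t * y) * t))) /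
        (y * Real.cos (t * y) + x * Real.sin (t * y)) ^ 2 := by
    rw [div_mul_eq_mul_div, div_eq_div_iff
      (mul_ne_zero (pow_ne_zero 2 hx) hsne) (pow_ne_zero 2 hD0)]
    rw [Real.cot_eq_cos_div_sin]
    field_simp
    ring
  rw [heq]
  apply HasDerivAt.congr_of_eventuallyEq hg
  have hopen : IsOpen {y' : ℝ | Real.sin (t * y') ≠ 0} := by
    have : Continuous fun y' : ℝ => Real.sin (t * y') :=
      Real.continuous_sin.comp (continuous_const.mul continuous_id)
    exact isOpen_compl_singleton.preimage this
  filter_upwards [hopen.mem_nhds hsne] with y' hs'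
  unfold kMap
  have hrw : y' * Real.cot (t * y') + x
      = (y' * Real.cos (t * y') + x * Real.sin (t * y')) / Real.sin (t * y') := by
    rw [Real.cot_eq_cos_div_sin, add_div, mul_div_assoc, mul_div_assoc, div_self hs', mul_one]
  rw [hrw, div_div_eq_mul_div,
    show y' / Real.sin (t * y') * Real.exp (-t * x) * Real.sin (t * y')
      = Real.exp (-t * x) * y' by
        rw [div_mul_eq_mul_div, div_mul_cancel₀ _ hs', mul_comm]]
  rfl

set_option maxHeartbeats 1000000 in
/-- let `t < 0`, `y ∈ (0, −π/t)` and `x` with `x + y·cot(ty) ≠ 0`. Then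
`∂_y k_t(x, y) = (e^{-tx}/((x + y·cot(ty))²·sin(ty)))·[(ty² + x) − t·x·y·cot(ty)]`.
Moreover, for `y ∈ (0, y_t)` one has `∂_y k_t(x_t^−(y), y) > 0`. -/
theorem kMap_deriv_y (t yt : ℝ) (ht : t < 0)
    (hyt : IsLeast {y : ℝ | 0 < y ∧ fMap t y = -1} yt) :
    (∀ y ∈ Set.Ioo 0 (-Real.pi / t), ∀ x : ℝ, x + y * Real.cot (t * y) ≠ 0 →
      HasDerivAt (fun y' => kMap t x y')
        (Real.exp (-t * x) /
            ((x + y * Real.cot (t * y)) ^ 2 * Real.sin (t * y)) *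
          ((t * y ^ 2 + x) - t * x * y * Real.cot (t * y))) y) ∧
    (∀ y ∈ Set.Ioo 0 yt, 0 < deriv (fun y' => kMap t (xMinus t y) y') y) := by
  constructor
  · intro y hy x hx
    exact kMap_hasDerivAt t x y ht hy.1 hy.2 hx
  · intro y hy
    obtain ⟨hy0, hylt⟩ := hy
    have hpit : (0:ℝ) < -Real.pi / t :=
      div_pos_of_neg_of_neg (by linarith [Real.pi_pos]) ht
    have hmem : (-Real.pi / t) ∈ {y : ℝ | 0 < y ∧ fMap t y = -1} := by
      refine ⟨hpit, ?_⟩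
      have h1 : t * (-Real.pi / t) = -Real.pi := by
        rw [mul_comm, div_mul_cancel₀ _ ht.ne]
      simp [fMap, h1]
    have hle : yt ≤ -Real.pi / t := hyt.2 hmem
    have hy1 : y < -Real.pi / t := lt_of_lt_of_le hylt hle
    have hu1 : -Real.pi < t * y := by
      rw [lt_div_iff_of_neg ht] at hy1
      linarith [mul_comm y t]
    have hu2 : t * y < 0 := mul_neg_of_neg_of_pos ht hy0
    have hs : Real.sin (t * y) < 0 := sin_mul_neg' hu1 hu2
    have hsne : Real.sin (t * y) ≠ 0 := hs.ne
    -- f bounds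
    have hflt : fMap t y < 1 := by
      unfold fMap
      nlinarith [Real.cos_le_one (t * y)]
    have hfgt : -1 < fMap t y := by
      by_contra h
      push_neg at h
      have hcont : ContinuousOn (fMap t) (Set.Icc 0 y) := by
        apply Continuous.continuousOn
        unfold fMap
        exact ((continuous_const.mul continuous_id).mul
            (Real.continuous_sin.comp (continuous_const.mul continuous_id))).add
          (Real.continuous_cos.comp (continuous_const.mul continuous_id))
      have h0 : fMap t 0 = 1 := by simp [fMap]
      have hmem' : (-1:ℝ) ∈ Set.Icc (fMap t y) (fMap t 0) := ⟨h, by rw [h0]; linarith⟩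
      obtain ⟨c', hc', hfc'⟩ := intermediate_value_Icc' hy0.le hcont hmem'
      have hc0 : c' ≠ 0 := by
        intro h'
        rw [h', h0] at hfc'
        norm_num at hfc'
      have : yt ≤ c' := hyt.2 ⟨lt_of_le_of_ne hc'.1 (Ne.symm hc0), hfc'⟩
      linarith [hc'.2]
    have hpy : Real.sin (t * y) ^ 2 + Real.cos (t * y) ^ 2 = 1 := Real.sin_sq_add_cos_sq _
    have hws : (y * Real.cot (t * y)) * Real.sin (t * y) = y * Real.cos (t * y) := by
      rw [Real.cot_eq_cos_div_sin, mul_assoc, div_mul_cancel₀ _ hsne]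
    have hf2 : (2 * y * Real.sin (t * y) + Real.cos (t * y)) ^ 2 < 1 := by
      unfold fMap at hflt hfgt
      nlinarith
    have hr : 0 ≤ 1 / 4 - y ^ 2 - y * Real.cot (t * y) := by
      nlinarith [hf2, hpy, hws, mul_pos_of_neg_of_neg hs hs]
    have hyne : y ≠ 0 := hy0.ne'
    have hv : vMap t y = Real.sqrt (1 / 4 - y ^ 2 - y * Real.cot (t * y)) := by
      rw [vMap, if_neg hyne]
    have hv0 : 0 ≤ vMap t y := by rw [hv]; exact Real.sqrt_nonneg _
    have hv2 : vMap t y ^ 2 = 1 / 4 - y ^ 2 - y * Real.cot (t * y) := by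
      rw [hv]; exact Real.sq_sqrt hr
    have hxv : xMinus t y = -1 / 2 - vMap t y := rfl
    have hxw : xMinus t y + y * Real.cot (t * y) < 0 := by
      nlinarith [hv2, hv0, hy0, hxv]
    have hd := kMap_hasDerivAt t (xMinus t y) y ht hy0 hy1 hxw.ne
    rw [hd.deriv]
    have hA : Real.exp (-t * xMinus t y) /
        ((xMinus t y + y * Real.cot (t * y)) ^ 2 * Real.sin (t * y)) < 0 := by
      apply div_neg_of_pos_of_neg (Real.exp_pos _)
      exact mul_neg_of_pos_of_neg ((sq_nonneg _).lt_of_ne (Ne.symm (pow_ne_zero 2 hxw.ne))) hs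
    have htw : t * (y * Real.cot (t * y)) < 1 := by
      have h := ucot_lt_one hu1 hu2
      linarith [show t * (y * Real.cot (t * y)) = t * y * Real.cot (t * y) from by ring]
    have hwv : y * Real.cot (t * y) = 1 / 4 - y ^ 2 - vMap t y ^ 2 := by linarith [hv2]
    have htw' : t * (1 / 4 - y ^ 2 - vMap t y ^ 2) < 1 := by rw [← hwv]; exact htw
    have hExpr : (t * y ^ 2 + xMinus t y) - t * xMinus t y * (y * Real.cot (t * y)) < 0 := by
      rw [hwv, hxv]
      nlinarith [mul_pos (show (0:ℝ) < vMap t y + 1 / 2 by linarith)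
          (show (0:ℝ) < 1 - t * (1 / 4 - y ^ 2 - vMap t y ^ 2) by linarith),
        mul_pos (neg_pos.mpr ht) (mul_pos hy0 hy0)]
    have := mul_pos_of_neg_of_neg hA hExpr
    calc (0:ℝ) < _ := this
      _ = _ := by ring
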